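/- arXiv:1307.0052 — 5 statements merged into one kernel-verified Lean document; each statement's English description precedes it below -/
import Mathlib

section
/- Let 0 < P < P'. Suppose there exists a Hermitian positive semidefinite matrix X* ∈ S(P) that attains λ̃(P) (i.e. min_{1≤i≤N} f_i(X*)/(γ_i g_i(X*)) = λ̃(P) and min_{1≤i≤N} f_i(X)/(γ_i g_i(X)) ≤ λ̃(P) for every X ∈ S(P)), and that λ̃(P) > 0. Suppose also that λ̃(P') is attained by some X ∈ S(P'). Then λ̃(P') > λ̃(P); that is, the optimal value of the relaxed max-min SINR problem is a strictly increasing function of the relay power budget. -/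
/-!
Scaling a point `X⋆ ∈ S(P)` attaining `λ̃(P)` by `t = P' / P > 1` gives a point of `S(P')`. Each ratio
`t f / (γ (t g + σ²))` strictly exceeds `f / (γ (g + σ²))` because the noise term `σ²` does not
scale and `f > 0` (which follows from `λ̃(P) > 0`). Hence the minimum strictly increases, and
`λ̃(P')` dominates it.
-/

open Matrix ComplexOrder

/-- The minimum of a finite family of reals indexed by `Fin N`, `N > 0`. -/
noncomputable def minOver {N : ℕ} (hN : 0 < N) (v : Fin N → ℝ) : ℝ :=
  Finset.univ.inf' (Finset.univ_nonempty_iff.mpr (Fin.pos_iff_nonempty.mp hN)) v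

lemma minOver_le {N : ℕ} (hN : 0 < N) (v : Fin N → ℝ) (i : Fin N) : minOver hN v ≤ v i :=
  Finset.inf'_le _ (Finset.mem_univ i)

lemma lt_minOver_iff {N : ℕ} (hN : 0 < N) {v : Fin N → ℝ} {a : ℝ} :
    a < minOver hN v ↔ ∀ i, a < v i := by
  simp [minOver]

lemma div_mul_add_lt_mul_div_mul_mul_add {f c g s t : ℝ} (hf : 0 < f) (hc : 0 < c)
    (hg : 0 ≤ g) (hs : 0 < s) (ht : 1 < t) :
    f / (c * (g + s)) < t * f / (c * (t * g + s)) := by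
  have hts : 0 < t * g + s := by nlinarith
  rw [div_lt_div_iff₀ (by positivity) (by positivity)]
  nlinarith [mul_pos (mul_pos (sub_pos.mpr ht) hf) (mul_pos hc hs)]

section Matrix

variable {n : Type*} [Fintype n]

lemma Matrix.PosSemidef.re_trace_nonneg {A : Matrix n n ℂ} (hA : A.PosSemidef) :
    0 ≤ A.trace.re :=
  (Complex.nonneg_iff.mp hA.trace_nonneg).1

lemma Matrix.PosSemidef.re_trace_mul_nonneg [DecidableEq n] {A B : Matrix n n ℂ}
    (hA : A.PosSemidef) (hB : B.PosSemidef) : 0 ≤ (A * B).trace.re := by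
  obtain ⟨C, rfl⟩ : ∃ C : Matrix n n ℂ, B = Cᴴ * C := by
    open scoped MatrixOrder in exact CStarAlgebra.nonneg_iff_eq_star_mul_self.mp hB.nonneg
  rw [← Matrix.mul_assoc, trace_mul_cycle]
  exact (hA.mul_mul_conjTranspose_same C).re_trace_nonneg

lemma re_trace_mul_real_smul (E X : Matrix n n ℂ) (t : ℝ) :
    (E * (t • X)).trace.re = t * (E * X).trace.re := by
  simp [Matrix.mul_smul, trace_smul]

noncomputable def sinr (E1 E2 : Matrix n n ℂ) (γ σ : ℝ) (X : Matrix n n ℂ) : ℝ :=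
  (E1 * X).trace.re / (γ * ((E2 * X).trace.re + σ ^ 2))

lemma sinr_lt_sinr_real_smul [DecidableEq n] {E1 E2 X : Matrix n n ℂ} {γ σ t : ℝ}
    (hE2 : E2.PosSemidef) (hX : X.PosSemidef) (hγ : 0 < γ) (hσ : 0 < σ)
    (hpos : 0 < sinr E1 E2 γ σ X) (ht : 1 < t) :
    sinr E1 E2 γ σ X < sinr E1 E2 γ σ (t • X) := by
  have hg := hE2.re_trace_mul_nonneg hX
  have hf : 0 < (E1 * X).trace.re :=
    (div_pos_iff_of_pos_right (by positivity)).mp hpos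
  unfold sinr
  rw [re_trace_mul_real_smul, re_trace_mul_real_smul]
  exact div_mul_add_lt_mul_div_mul_mul_add hf hγ hg (by positivity) ht

end Matrix

noncomputable def minSinr {M N : ℕ} (hN : 0 < N) (E1 E2 : Fin N → Matrix (Fin M) (Fin M) ℂ)
    (γ σ : Fin N → ℝ) (X : Matrix (Fin M) (Fin M) ℂ) : ℝ :=
  minOver hN fun i => sinr (E1 i) (E2 i) (γ i) (σ i) X

lemma minSinr_lt_minSinr_real_smul {M N : ℕ} (hN : 0 < N)
    {E1 E2 : Fin N → Matrix (Fin M) (Fin M) ℂ} (hE2 : ∀ i, (E2 i).PosSemidef)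
    {γ σ : Fin N → ℝ} (hγ : ∀ i, 0 < γ i) (hσ : ∀ i, 0 < σ i)
    {X : Matrix (Fin M) (Fin M) ℂ} (hX : X.PosSemidef) (hpos : 0 < minSinr hN E1 E2 γ σ X)
    {t : ℝ} (ht : 1 < t) :
    minSinr hN E1 E2 γ σ X < minSinr hN E1 E2 γ σ (t • X) := by
  refine (lt_minOver_iff hN).mpr fun i => ?_
  have hle : minSinr hN E1 E2 γ σ X ≤ sinr (E1 i) (E2 i) (γ i) (σ i) X := minOver_le hN _ i
  exact hle.trans_lt
    (sinr_lt_sinr_real_smul (hE2 i) hX (hγ i) (hσ i) (hpos.trans_le hle) ht)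

theorem stmt0_general {M N : ℕ} (hN : 0 < N)
    (E1 E2 : Fin N → Matrix (Fin M) (Fin M) ℂ)
    (hE2 : ∀ i, (E2 i).PosSemidef)
    (E0 : Matrix (Fin M) (Fin M) ℂ)
    (γ σ : Fin N → ℝ) (hγ : ∀ i, 0 < γ i) (hσ : ∀ i, 0 < σ i)
    (P P' lam lam' : ℝ) (hP : 0 < P) (hPP' : P < P')
    (Xs : Matrix (Fin M) (Fin M) ℂ)
    (hXsPSD : Xs.PosSemidef) (hXsP : (Matrix.trace (E0 * Xs)).re ≤ P)
    (hXsval : minOver hN (fun i =>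
        (Matrix.trace (E1 i * Xs)).re /
          (γ i * ((Matrix.trace (E2 i * Xs)).re + σ i ^ 2))) = lam)
    (hlam : 0 < lam)
    (hX'opt : ∀ X : Matrix (Fin M) (Fin M) ℂ, X.PosSemidef →
        (Matrix.trace (E0 * X)).re ≤ P' →
        minOver hN (fun i =>
          (Matrix.trace (E1 i * X)).re /
            (γ i * ((Matrix.trace (E2 i * X)).re + σ i ^ 2))) ≤ lam') :
    lam < lam' := by
  change minSinr hN E1 E2 γ σ Xs = lam at hXsval
  subst hXsval
  have ht : 1 < P' / P := (one_lt_div hP).mpr hPP'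
  have hfeasible : (E0 * ((P' / P) • Xs)).trace.re ≤ P' := by
    rw [re_trace_mul_real_smul]
    calc P' / P * (E0 * Xs).trace.re ≤ P' / P * P := by gcongr
      _ = P' := div_mul_cancel₀ P' hP.ne'
  exact (minSinr_lt_minSinr_real_smul hN hE2 hγ hσ hXsPSD hlam ht).trans_le
    (hX'opt _ (hXsPSD.smul (by positivity)) hfeasible)

/-- The optimal value `λ̃(P)` of the relaxed max-min SINR problem is strictly increasing in the
relay power budget `P`: if `0 < P < P'`, `λ̃(P)` is attained at `Xs ∈ S(P)` with `λ̃(P) > 0`,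
and `λ̃(P')` is attained at `X' ∈ S(P')`, then `λ̃(P) < λ̃(P')`. -/
theorem stmt0 {M N : ℕ} (hM : 0 < M) (hN : 0 < N)
    (E1 E2 : Fin N → Matrix (Fin M) (Fin M) ℂ)
    (hE1 : ∀ i, (E1 i).PosSemidef) (hE2 : ∀ i, (E2 i).PosSemidef)
    (E0 : Matrix (Fin M) (Fin M) ℂ) (hE0 : E0.PosSemidef)
    (γ σ : Fin N → ℝ) (hγ : ∀ i, 0 < γ i) (hσ : ∀ i, 0 < σ i)
    (P P' lam lam' : ℝ) (hP : 0 < P) (hPP' : P < P')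
    (Xs : Matrix (Fin M) (Fin M) ℂ)
    (hXsPSD : Xs.PosSemidef) (hXsP : (Matrix.trace (E0 * Xs)).re ≤ P)
    (hXsval : minOver hN (fun i =>
        (Matrix.trace (E1 i * Xs)).re /
          (γ i * ((Matrix.trace (E2 i * Xs)).re + σ i ^ 2))) = lam)
    (hXsopt : ∀ X : Matrix (Fin M) (Fin M) ℂ, X.PosSemidef →
        (Matrix.trace (E0 * X)).re ≤ P →
        minOver hN (fun i =>
          (Matrix.trace (E1 i * X)).re /
            (γ i * ((Matrix.trace (E2 i * X)).re + σ i ^ 2))) ≤ lam)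
    (hlam : 0 < lam)
    (X' : Matrix (Fin M) (Fin M) ℂ)
    (hX'PSD : X'.PosSemidef) (hX'P : (Matrix.trace (E0 * X')).re ≤ P')
    (hX'val : minOver hN (fun i =>
        (Matrix.trace (E1 i * X')).re /
          (γ i * ((Matrix.trace (E2 i * X')).re + σ i ^ 2))) = lam')
    (hX'opt : ∀ X : Matrix (Fin M) (Fin M) ℂ, X.PosSemidef →
        (Matrix.trace (E0 * X)).re ≤ P' →
        minOver hN (fun i =>
          (Matrix.trace (E1 i * X)).re /
            (γ i * ((Matrix.trace (E2 i * X)).re + σ i ^ 2))) ≤ lam') :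
    lam < lam' :=
  stmt0_general hN E1 E2 hE2 E0 γ σ hγ hσ P P' lam lam' hP hPP' Xs hXsPSD hXsP hXsval hlam hX'opt
end

section
/- For λ > 0 define the power-minimization optimal value P(λ) = inf { Re tr(E_0 X) : X Hermitian positive semidefinite, f_i(X) ≥ λ γ_i g_i(X) for all i = 1,…,N }. Let 0 < λ < λ' and suppose P(λ') is attained at some feasible X' (i.e. X' is Hermitian PSD, f_i(X') ≥ λ' γ_i g_i(X') for all i, and Re tr(E_0 X') = P(λ')) with Re tr(E_0 X') > 0. Then the matrix (λ/λ')·X' is feasible for the problem with parameter λ, and consequently P(λ) ≤ (λ/λ')·P(λ') < P(λ'); that is, P(λ) is strictly increasing in λ. -/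
/-!
Shrinking a feasible point `X'` for the parameter `λ'` by `c = λ / λ' ∈ (0, 1)` multiplies
every `f_i` and the cost by `c`, while `λ γ_i g_i(c X') ≤ λ γ_i g_i(X') = c λ' γ_i g_i(X')`
because the interference `tr(E_i⁽²⁾ X')` is nonnegative. So `c X'` is feasible for `λ`, and its
cost `c P(λ')` is strictly below `P(λ') > 0`.
-/

open Matrix ComplexOrder

open scoped MatrixOrder in
theorem Matrix.PosSemidef.trace_mul_nonneg {𝕜 n : Type*} [RCLike 𝕜] [Fintype n] [DecidableEq n]
    {A B : Matrix n n 𝕜} (hA : A.PosSemidef) (hB : B.PosSemidef) : 0 ≤ (A * B).trace := by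
  have hsqrt : (CFC.sqrt A)ᴴ = CFC.sqrt A := (CFC.sqrt_nonneg A).posSemidef.isHermitian
  have hconj : (CFC.sqrt A * B * CFC.sqrt A).PosSemidef := by
    simpa only [hsqrt] using hB.conjTranspose_mul_mul_same (CFC.sqrt A)
  calc 0 ≤ (CFC.sqrt A * B * CFC.sqrt A).trace := hconj.trace_nonneg
    _ = (A * B).trace := by rw [trace_mul_cycle, CFC.sqrt_mul_sqrt_self A hA.nonneg]

theorem Matrix.re_trace_mul_ofReal_smul {n : Type*} [Fintype n] (E X : Matrix n n ℂ) (c : ℝ) :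
    (E * ((c : ℂ) • X)).trace.re = c * (E * X).trace.re := by
  rw [Matrix.mul_smul, trace_smul, smul_eq_mul, Complex.re_ofReal_mul]

theorem sinr_constraint_smul_div {n ι : Type*} [Fintype n] [DecidableEq n]
    (E1 E2 : ι → Matrix n n ℂ) (hE2 : ∀ i, (E2 i).PosSemidef) (γ σ : ι → ℝ)
    (hγ : ∀ i, 0 ≤ γ i) {lam lam' : ℝ} (hlam : 0 < lam) (hll' : lam ≤ lam')
    {X : Matrix n n ℂ} (hX : X.PosSemidef)
    (hfeas : ∀ i, (E1 i * X).trace.re ≥ lam' * (γ i * ((E2 i * X).trace.re + σ i ^ 2))) (i : ι) :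
    (E1 i * (((lam / lam' : ℝ) : ℂ) • X)).trace.re ≥
      lam * (γ i * ((E2 i * (((lam / lam' : ℝ) : ℂ) • X)).trace.re + σ i ^ 2)) := by
  have hlam' : 0 < lam' := hlam.trans_le hll'
  set c := lam / lam'
  have hc0 : 0 ≤ c := by positivity
  have hc1 : c ≤ 1 := (div_le_one hlam').mpr hll'
  have hclam : c * lam' = lam := div_mul_cancel₀ lam hlam'.ne'
  have hγi := hγ i
  have hg : 0 ≤ (E2 i * X).trace.re :=
    (Complex.nonneg_iff.mp ((hE2 i).trace_mul_nonneg hX)).1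
  rw [re_trace_mul_ofReal_smul, re_trace_mul_ofReal_smul]
  calc lam * (γ i * (c * (E2 i * X).trace.re + σ i ^ 2))
      ≤ lam * (γ i * ((E2 i * X).trace.re + σ i ^ 2)) := by
        gcongr
        exact mul_le_of_le_one_left hg hc1
    _ = c * (lam' * (γ i * ((E2 i * X).trace.re + σ i ^ 2))) := by
        rw [← hclam]; ring
    _ ≤ c * (E1 i * X).trace.re := by gcongr; exact hfeas i

theorem stmt2_general {M N : ℕ}
    (E1 E2 : Fin N → Matrix (Fin M) (Fin M) ℂ)
    (hE2 : ∀ i, (E2 i).PosSemidef)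
    (E0 : Matrix (Fin M) (Fin M) ℂ)
    (γ σ : Fin N → ℝ) (hγ : ∀ i, 0 < γ i)
    (lam lam' Pl Pl' : ℝ) (hlam : 0 < lam) (hll' : lam < lam')
    -- `P(λ')` is attained at the feasible point `X'`
    (X' : Matrix (Fin M) (Fin M) ℂ) (hX'PSD : X'.PosSemidef)
    (hX'feas : ∀ i, (Matrix.trace (E1 i * X')).re ≥
        lam' * (γ i * ((Matrix.trace (E2 i * X')).re + σ i ^ 2)))
    (hX'val : (Matrix.trace (E0 * X')).re = Pl')
    (hPl'pos : 0 < Pl')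
    -- `Pl = P(λ)` is a lower bound of the cost over the feasible set for parameter `λ`
    (hPl : ∀ X : Matrix (Fin M) (Fin M) ℂ, X.PosSemidef →
        (∀ i, (Matrix.trace (E1 i * X)).re ≥
          lam * (γ i * ((Matrix.trace (E2 i * X)).re + σ i ^ 2))) →
        Pl ≤ (Matrix.trace (E0 * X)).re) :
    (((lam / lam' : ℝ) : ℂ) • X').PosSemidef ∧
    (∀ i, (Matrix.trace (E1 i * (((lam / lam' : ℝ) : ℂ) • X'))).re ≥
        lam * (γ i * ((Matrix.trace (E2 i * (((lam / lam' : ℝ) : ℂ) • X'))).re + σ i ^ 2))) ∧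
    Pl ≤ (lam / lam') * Pl' ∧ (lam / lam') * Pl' < Pl' := by
  have hlam' : 0 < lam' := hlam.trans hll'
  have hpsd : (((lam / lam' : ℝ) : ℂ) • X').PosSemidef :=
    hX'PSD.smul (Complex.zero_le_real.mpr (by positivity))
  have hfeas := sinr_constraint_smul_div E1 E2 hE2 γ σ (fun i ↦ (hγ i).le) hlam hll'.le
    hX'PSD hX'feas
  refine ⟨hpsd, hfeas, ?_, mul_lt_of_lt_one_left hPl'pos ((div_lt_one hlam').mpr hll')⟩
  simpa only [re_trace_mul_ofReal_smul, hX'val] using hPl _ hpsd hfeas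

/-- Strict monotonicity of the power-minimization optimal value `P(λ)` in the SINR scaling
parameter `λ`: if `0 < λ < λ'` and `P(λ')` is attained at a feasible `X'` with
`Re tr(E0 X') = P(λ') > 0`, then `(λ/λ') • X'` is feasible for the problem with parameter
`λ`, and consequently `P(λ) ≤ (λ/λ')·P(λ') < P(λ')`. -/
theorem stmt2 {M N : ℕ} (hM : 0 < M) (hN : 0 < N)
    (E1 E2 : Fin N → Matrix (Fin M) (Fin M) ℂ)
    (hE1 : ∀ i, (E1 i).PosSemidef) (hE2 : ∀ i, (E2 i).PosSemidef)
    (E0 : Matrix (Fin M) (Fin M) ℂ) (hE0 : E0.PosSemidef)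
    (γ σ : Fin N → ℝ) (hγ : ∀ i, 0 < γ i) (hσ : ∀ i, 0 < σ i)
    (lam lam' Pl Pl' : ℝ) (hlam : 0 < lam) (hll' : lam < lam')
    -- `P(λ')` is attained at the feasible point `X'`
    (X' : Matrix (Fin M) (Fin M) ℂ) (hX'PSD : X'.PosSemidef)
    (hX'feas : ∀ i, (Matrix.trace (E1 i * X')).re ≥
        lam' * (γ i * ((Matrix.trace (E2 i * X')).re + σ i ^ 2)))
    (hX'val : (Matrix.trace (E0 * X')).re = Pl')
    (hPl'pos : 0 < Pl')
    -- `Pl = P(λ)` is a lower bound of the cost over the feasible set for parameter `λ`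
    (hPl : ∀ X : Matrix (Fin M) (Fin M) ℂ, X.PosSemidef →
        (∀ i, (Matrix.trace (E1 i * X)).re ≥
          lam * (γ i * ((Matrix.trace (E2 i * X)).re + σ i ^ 2))) →
        Pl ≤ (Matrix.trace (E0 * X)).re) :
    (((lam / lam' : ℝ) : ℂ) • X').PosSemidef ∧
    (∀ i, (Matrix.trace (E1 i * (((lam / lam' : ℝ) : ℂ) • X'))).re ≥
        lam * (γ i * ((Matrix.trace (E2 i * (((lam / lam' : ℝ) : ℂ) • X'))).re + σ i ^ 2))) ∧
    Pl ≤ (lam / lam') * Pl' ∧ (lam / lam') * Pl' < Pl' :=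
  stmt2_general E1 E2 hE2 E0 γ σ hγ lam lam' Pl Pl' hlam hll' X' hX'PSD hX'feas hX'val hPl'pos hPl
end

section
/- Let G ⊆ ℝ^n be a nonempty normal set contained in the nonnegative orthant, and let z ∈ ℝ^n with z_i > 0 for all i. Suppose λ* ≥ 0 satisfies λ*·z ∈ G and α ≤ λ* for every α ≥ 0 with α·z ∈ G (i.e. λ* = max{α ≥ 0 : αz ∈ G} is attained). Set y = λ*·z and, for each i, let z(i) be the vector obtained from z by replacing its i-th coordinate by y_i. Then every w ∈ G with 0 ≤ w ≤ z satisfies w ≤ z(i) for some index i; equivalently, G ∩ [0, z] ⊆ ∪_{i=1}^{n} [0, z(i)]. -/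
/-!
If `w ≤ z` lay in no box `[0, z(i)]`, then `w i > λ* z i` for every coordinate. Finitely many
strict inequalities survive a small increase of `λ*`, so `μ z ≤ w` for some `μ > λ*`; by normality
`μ z ∈ G`, contradicting the maximality of `λ*`.
-/

open Filter Topology

theorem exists_gt_smul_le_of_forall_mul_lt {ι : Type*} [Finite ι] {z w : ι → ℝ} {lam : ℝ}
    (h : ∀ i, lam * z i < w i) : ∃ μ, lam < μ ∧ μ • z ≤ w := by
  have hnear : ∀ᶠ μ in 𝓝[>] lam, ∀ i, μ * z i < w i :=
    eventually_all.2 fun i => nhdsWithin_le_nhds <|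
      (continuous_id.mul continuous_const).continuousAt.eventually (gt_mem_nhds (h i))
  obtain ⟨μ, hμw, hlamμ⟩ := (hnear.and self_mem_nhdsWithin).exists
  exact ⟨μ, hlamμ, fun i => (hμw i).le⟩

theorem stmt3_general {n : ℕ} (G : Set (Fin n → ℝ))
    (hnormal : ∀ z' z : Fin n → ℝ, 0 ≤ z' → z' ≤ z → z ∈ G → z' ∈ G)
    (z : Fin n → ℝ) (hz : ∀ i, 0 < z i)
    (lam : ℝ) (hlam : 0 ≤ lam)
    (hmax : ∀ α : ℝ, 0 ≤ α → α • z ∈ G → α ≤ lam) :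
    ∀ w ∈ G, (0 : Fin n → ℝ) ≤ w → w ≤ z →
      ∃ i : Fin n, w ≤ Function.update z i (lam * z i) := by
  intro w hwG _ hwz
  by_contra! hnot
  have hlt : ∀ i, lam * z i < w i := fun i =>
    not_le.1 fun hi => hnot i (le_update_iff.2 ⟨hi, fun j _ => hwz j⟩)
  obtain ⟨μ, hlamμ, hμw⟩ := exists_gt_smul_le_of_forall_mul_lt hlt
  have hμ : 0 ≤ μ := hlam.trans hlamμ.le
  have hμG : μ • z ∈ G := hnormal _ w (smul_nonneg hμ fun i => (hz i).le) hμw hwG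
  exact (hmax μ hμ hμG).not_gt hlamμ

/-- Polyblock reduction step: if `G ⊆ ℝⁿ₊` is a nonempty normal set, `z` has strictly positive
coordinates, and `λ* = max {α ≥ 0 : α • z ∈ G}` is attained (with `y = λ* • z` the projection
of `z` on `G`), then every `w ∈ G` with `0 ≤ w ≤ z` satisfies `w ≤ z(i)` for some `i`, where
`z(i)` is `z` with its `i`-th coordinate replaced by `y i = λ* * z i`. -/
theorem stmt3 {n : ℕ} (G : Set (Fin n → ℝ)) (hne : G.Nonempty)
    (hGpos : ∀ w ∈ G, (0 : Fin n → ℝ) ≤ w)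
    (hnormal : ∀ z' z : Fin n → ℝ, 0 ≤ z' → z' ≤ z → z ∈ G → z' ∈ G)
    (z : Fin n → ℝ) (hz : ∀ i, 0 < z i)
    (lam : ℝ) (hlam : 0 ≤ lam) (hlamG : lam • z ∈ G)
    (hmax : ∀ α : ℝ, 0 ≤ α → α • z ∈ G → α ≤ lam) :
    ∀ w ∈ G, (0 : Fin n → ℝ) ≤ w → w ≤ z →
      ∃ i : Fin n, w ≤ Function.update z i (lam * z i) :=
  stmt3_general G hnormal z hz lam hlam hmax
end

section
/- Let λ < λ' be real numbers. Suppose the set { min_{1≤i≤N} (f_i(X) − λ c_i g_i(X)) : X ∈ S } is bounded above, and F(λ') is attained at some X' ∈ S (i.e. min_i (f_i(X') − λ' c_i g_i(X')) = F(λ')). Then F(λ) > F(λ'); i.e., the parametric Dinkelbach value function F is strictly decreasing. -/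
theorem minOver_lt_minOver {N : ℕ} (hN : 0 < N) {v w : Fin N → ℝ} (hvw : ∀ i, v i < w i) :
    minOver hN v < minOver hN w :=
  (Finset.lt_inf'_iff _).2 fun j _ => (Finset.inf'_lt_iff _).2 ⟨j, Finset.mem_univ j, hvw j⟩

theorem minOver_sub_mul_mul_lt {N : ℕ} (hN : 0 < N) {a b c : Fin N → ℝ}
    (hb : ∀ i, 0 < b i) (hc : ∀ i, 0 < c i) {lam lam' : ℝ} (h : lam < lam') :
    minOver hN (fun i => a i - lam' * c i * b i) < minOver hN (fun i => a i - lam * c i * b i) :=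
  minOver_lt_minOver hN fun i => by
    have hcb := mul_pos (hc i) (hb i)
    nlinarith

theorem stmt6_general {S : Type*} {N : ℕ} (hN : 0 < N)
    (f g : Fin N → S → ℝ) (hg : ∀ i X, 0 < g i X)
    (c : Fin N → ℝ) (hc : ∀ i, 0 < c i)
    (lam lam' : ℝ) (h : lam < lam')
    (hbdd : BddAbove (Set.range fun X : S => minOver hN fun i => f i X - lam * c i * g i X))
    (X' : S)
    (hX' : minOver hN (fun i => f i X' - lam' * c i * g i X') =
      sSup (Set.range fun X : S => minOver hN fun i => f i X - lam' * c i * g i X)) :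
    sSup (Set.range fun X : S => minOver hN fun i => f i X - lam' * c i * g i X) <
      sSup (Set.range fun X : S => minOver hN fun i => f i X - lam * c i * g i X) := by
  rw [← hX']
  calc minOver hN (fun i => f i X' - lam' * c i * g i X')
      < minOver hN (fun i => f i X' - lam * c i * g i X') :=
        minOver_sub_mul_mul_lt hN (fun i => hg i X') hc h
    _ ≤ _ := le_csSup hbdd ⟨X', rfl⟩

/-- The parametric Dinkelbach value function `F(λ) = sup_X min_i (f_i(X) − λ c_i g_i(X))` is
strictly decreasing: if `λ < λ'`, the defining set for `F(λ)` is bounded above, and `F(λ')`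
is attained at some `X'`, then `F(λ') < F(λ)`. -/
theorem stmt6 {S : Type*} [Nonempty S] {N : ℕ} (hN : 0 < N)
    (f g : Fin N → S → ℝ) (hg : ∀ i X, 0 < g i X)
    (c : Fin N → ℝ) (hc : ∀ i, 0 < c i)
    (lam lam' : ℝ) (h : lam < lam')
    (hbdd : BddAbove (Set.range fun X : S => minOver hN fun i => f i X - lam * c i * g i X))
    (X' : S)
    (hX' : minOver hN (fun i => f i X' - lam' * c i * g i X') =
      sSup (Set.range fun X : S => minOver hN fun i => f i X - lam' * c i * g i X)) :
    sSup (Set.range fun X : S => minOver hN fun i => f i X - lam' * c i * g i X) <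
      sSup (Set.range fun X : S => minOver hN fun i => f i X - lam * c i * g i X) :=
  stmt6_general hN f g hg c hc lam lam' h hbdd X' hX'
end

section
/- Suppose the set { min_{1≤i≤N} f_i(X)/(c_i g_i(X)) : X ∈ S } is bounded above, and that for the given λ ∈ ℝ the set { min_{1≤i≤N} (f_i(X) − λ c_i g_i(X)) : X ∈ S } is bounded above. Then F(λ) ≤ 0 if and only if λ ≥ λ*. (In particular, the stopping test of the Dinkelbach-type algorithm, F(λ) ≤ 0, is passed exactly when the current parameter λ is at least the optimal max-min value λ*.) -/
theorem minOver_le_iff {N : ℕ} (hN : 0 < N) (v : Fin N → ℝ) (a : ℝ) :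
    minOver hN v ≤ a ↔ ∃ i, v i ≤ a := by
  simp [minOver, Finset.inf'_le_iff]

theorem minOver_le_iff_minOver_le {N : ℕ} (hN : 0 < N) {v w : Fin N → ℝ} {a b : ℝ}
    (h : ∀ i, v i ≤ a ↔ w i ≤ b) : minOver hN v ≤ a ↔ minOver hN w ≤ b := by
  simp only [minOver_le_iff, h]

theorem csSup_range_le_iff_csSup_range_le {ι α : Type*} [Nonempty ι]
    [ConditionallyCompleteLattice α] {u v : ι → α} {a b : α}
    (hu : BddAbove (Set.range u)) (hv : BddAbove (Set.range v))
    (h : ∀ x, u x ≤ a ↔ v x ≤ b) : sSup (Set.range u) ≤ a ↔ sSup (Set.range v) ≤ b := by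
  simp only [csSup_le_iff hu (Set.range_nonempty u), csSup_le_iff hv (Set.range_nonempty v),
    Set.forall_mem_range, h]

theorem sub_mul_nonpos_iff_div_le {K : Type*} [Field K] [LinearOrder K] [IsStrictOrderedRing K]
    {x d l : K} (hd : 0 < d) : x - l * d ≤ 0 ↔ x / d ≤ l := by
  rw [div_le_iff₀ hd, sub_nonpos]

/-- The stopping test of the Dinkelbach-type algorithm is passed exactly at or above the
optimal max-min value: `F(λ) ≤ 0 ↔ λ* ≤ λ`, where
`F(λ) = sup_X min_i (f_i(X) − λ c_i g_i(X))` and `λ* = sup_X min_i f_i(X)/(c_i g_i(X))`. -/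
theorem stmt7 {S : Type*} [Nonempty S] {N : ℕ} (hN : 0 < N)
    (f g : Fin N → S → ℝ) (hg : ∀ i X, 0 < g i X)
    (c : Fin N → ℝ) (hc : ∀ i, 0 < c i)
    (hbdd1 : BddAbove (Set.range fun X : S => minOver hN fun i => f i X / (c i * g i X)))
    (lam : ℝ)
    (hbdd2 : BddAbove (Set.range fun X : S => minOver hN fun i => f i X - lam * c i * g i X)) :
    sSup (Set.range fun X : S => minOver hN fun i => f i X - lam * c i * g i X) ≤ 0 ↔
      sSup (Set.range fun X : S => minOver hN fun i => f i X / (c i * g i X)) ≤ lam := by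
  refine csSup_range_le_iff_csSup_range_le hbdd2 hbdd1 fun X =>
    minOver_le_iff_minOver_le hN fun i => ?_
  rw [mul_assoc]
  exact sub_mul_nonpos_iff_div_le (mul_pos (hc i) (hg i X))
end
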